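/- For all n ≥ 0, (K₃(n))² + (K₃(n+1))² + (K₃(n+2))² = 21·4ⁿ + 2^(n+1)·(M(n+1) + 3·M(n+2)) + 6, where M(m) = 2 if m ≡ 0 (mod 3) and M(m) = −1 otherwise. -/
import Mathlib


def K3 : ℕ → ℤ
  | 0 => 3
  | 1 => 1
  | 2 => 3
  | n + 3 => K3 (n + 2) + K3 (n + 1) + 2 * K3 n

def M (m : ℕ) : ℤ := if m % 3 = 0 then 2 else -1

lemma M_sum (n : ℕ) : M n + M (n + 1) + M (n + 2) = 0 := by
  have h : n % 3 = 0 ∨ n % 3 = 1 ∨ n % 3 = 2 := by omega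
  rcases h with h | h | h <;> simp [M, Nat.add_mod, h]

lemma M_sq (n : ℕ) : (M n) ^ 2 + (M (n+1)) ^ 2 + (M (n+2)) ^ 2 = 6 := by
  have h : n % 3 = 0 ∨ n % 3 = 1 ∨ n % 3 = 2 := by omega
  rcases h with h | h | h <;> simp [M, Nat.add_mod, h] <;> ring

lemma key : ∀ n : ℕ, K3 n = 2 ^ n + M n := by
  intro n
  induction n using Nat.strong_induction_on with
  | _ n ih =>
    match n with
    | 0 => decide
    | 1 => decide
    | 2 => decide
    | n + 3 =>
      rw [K3, ih (n+2) (by omega), ih (n+1) (by omega), ih n (by omega)]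
      have h1 : M (n+3) = M n := by
        have : (n + 3) % 3 = n % 3 := by omega
        simp [M, this]
      have h2 := M_sum n
      rw [h1]
      ring_nf
      ring_nf at h2
      push_cast
      linear_combination (2:ℤ)^n * 8 + h2

theorem stmt16 : ∀ n : ℕ,
    (K3 n) ^ 2 + (K3 (n + 1)) ^ 2 + (K3 (n + 2)) ^ 2 =
      21 * 4 ^ n + 2 ^ (n + 1) * (M (n + 1) + 3 * M (n + 2)) + 6 := by
  intro n
  rw [key n, key (n+1), key (n+2)]
  have h2 := M_sum n
  have h3 := M_sq n
  have h4 : (4:ℤ)^n = 2^n * 2^n := by rw [show (4:ℤ) = 2*2 from rfl, mul_pow]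
  rw [h4]
  ring_nf
  ring_nf at h2 h3
  linear_combination h3 + (2:ℤ)^n * 2 * h2
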